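/- arXiv:math/9606208 — 4 statements merged into one kernel-verified Lean document; each statement's English description precedes it below -/
import Mathlib

section
/- The intersection of a fusion sequence of perfect trees is a perfect tree. Precisely: let ⟨P_σ : σ ∈ 2^{<ω}⟩ be a family of perfect subtrees of 2^{<ω} such that P_⟨⟩ is perfect, and for each σ, P_{σ⌢⟨0⟩} and P_{σ⌢⟨1⟩} are perfect subtrees of P_σ contained respectively in P_σ↑(h⌢⟨0⟩) and P_σ↑(h⌢⟨1⟩), where h is the first splitting node of P_σ. Then ⋂_{n∈ω} ⋃_{|σ|=n} P_σ is a perfect tree. -/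
def IsTree2 (T : Set (List Bool)) : Prop := ∀ s t : List Bool, s <+: t → t ∈ T → s ∈ T

def Splits (P : Set (List Bool)) (t : List Bool) : Prop :=
  t ++ [false] ∈ P ∧ t ++ [true] ∈ P

def PerfectTree (P : Set (List Bool)) : Prop :=
  P.Nonempty ∧ IsTree2 P ∧ ∀ t ∈ P, ∃ u ∈ P, t <+: u ∧ Splits P u

def restrict2 (P : Set (List Bool)) (s : List Bool) : Set (List Bool) :=
  {t ∈ P | s <+: t ∨ t <+: s}

/-- The intersection of a fusion sequence of perfect trees is a perfect tree:
given a family `⟨P_σ : σ ∈ 2^{<ω}⟩` of perfect trees such that `P_{σ⌢⟨j⟩}` is a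
perfect subtree of `P_σ` contained in `P_σ ↑ (h⌢⟨j⟩)`, where `h = h(P_σ)` is the
first splitting node of `P_σ`, the set `⋂_n ⋃_{|σ|=n} P_σ` is a perfect tree. -/
theorem stmt6 (P : List Bool → Set (List Bool)) (h : Set (List Bool) → List Bool)
    (hperf : ∀ σ, PerfectTree (P σ))
    (hfirst : ∀ σ, h (P σ) ∈ P σ ∧ Splits (P σ) (h (P σ)) ∧
      ∀ t ∈ P σ, Splits (P σ) t → h (P σ) <+: t)
    (hsub : ∀ σ (j : Bool), P (σ ++ [j]) ⊆ P σ ∧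
      P (σ ++ [j]) ⊆ restrict2 (P σ) (h (P σ) ++ [j])) :
    PerfectTree (⋂ n : ℕ, ⋃ σ : List Bool, ⋃ (_ : σ.length = n), P σ) := by
  set Q := ⋂ n : ℕ, ⋃ σ : List Bool, ⋃ (_ : σ.length = n), P σ with hQ
  -- membership in Q unfolded
  have hQmem : ∀ t, t ∈ Q ↔ ∀ n : ℕ, ∃ σ : List Bool, σ.length = n ∧ t ∈ P σ := by
    intro t
    simp [hQ, Set.mem_iInter, Set.mem_iUnion]
  -- every element of P σ is comparable with h (P σ)
  have hcomp : ∀ σ, ∀ t ∈ P σ, t <+: h (P σ) ∨ h (P σ) <+: t := by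
    intro σ t ht
    obtain ⟨u, hu, htu, hsp⟩ := (hperf σ).2.2 t ht
    have hhu : h (P σ) <+: u := (hfirst σ).2.2 u hu hsp
    exact List.prefix_or_prefix_of_prefix htu hhu
  -- the first splitting node of P (σ ++ [j]) extends h (P σ) ++ [j]
  have hstep : ∀ σ (j : Bool), h (P σ) ++ [j] <+: h (P (σ ++ [j])) := by
    intro σ j
    set s := h (P (σ ++ [j])) with hs
    set g := h (P σ) ++ [j] with hg
    have hsplit : Splits (P (σ ++ [j])) s := (hfirst (σ ++ [j])).2.1
    have hc0 : g <+: s ++ [false] ∨ s ++ [false] <+: g := by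
      have := (hsub σ j).2 hsplit.1
      exact this.2
    have hc1 : g <+: s ++ [true] ∨ s ++ [true] <+: g := by
      have := (hsub σ j).2 hsplit.2
      exact this.2
    -- helper: g <+: s ++ [b] → g <+: s ∨ g = s ++ [b]
    have hhelp : ∀ b : Bool, g <+: s ++ [b] → g <+: s ∨ g = s ++ [b] := by
      intro b hpre
      rcases le_or_gt g.length s.length with hle | hlt
      · left
        exact List.prefix_of_prefix_length_le hpre (List.prefix_append s [b]) hle
      · right
        apply List.IsPrefix.eq_of_length_le hpre
        simp only [List.length_append, List.length_cons, List.length_nil]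
        omega
    have hne : (s ++ [false] : List Bool) ≠ s ++ [true] := by simp
    rcases hc0 with hc0 | hc0
    · rcases hhelp false hc0 with hg' | hg'
      · exact hg'
      · -- g = s ++ [false]; contradiction with hc1
        exfalso
        rcases hc1 with hc1 | hc1
        · rw [hg'] at hc1
          exact hne (List.IsPrefix.eq_of_length_le hc1 (by simp))
        · rw [hg'] at hc1
          exact hne (List.IsPrefix.eq_of_length_le hc1 (by simp)).symm
    · rcases hc1 with hc1 | hc1
      · rcases hhelp true hc1 with hg' | hg'
        · exact hg'
        · exfalso
          rw [hg'] at hc0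
          exact hne (List.IsPrefix.eq_of_length_le hc0 (by simp))
      · -- s ++ [false] <+: g and s ++ [true] <+: g
        exfalso
        rcases List.prefix_or_prefix_of_prefix hc0 hc1 with hp | hp
        · exact hne (List.IsPrefix.eq_of_length_le hp (by simp))
        · exact hne (List.IsPrefix.eq_of_length_le hp (by simp)).symm
  -- P (σ ++ l) ⊆ P σ
  have hsubl : ∀ (l σ : List Bool), P (σ ++ l) ⊆ P σ := by
    intro l
    induction l with
    | nil => intro σ; simp
    | cons j l ih =>
      intro σ
      have h1 : P ((σ ++ [j]) ++ l) ⊆ P (σ ++ [j]) := ih (σ ++ [j])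
      have h2 : P (σ ++ [j]) ⊆ P σ := (hsub σ j).1
      simpa [List.append_assoc] using h1.trans h2
  -- h (P σ) ∈ P (σ ++ l) and h (P σ) <+: h (P (σ ++ l))
  have hmem : ∀ (l σ : List Bool), h (P σ) ∈ P (σ ++ l) ∧ h (P σ) <+: h (P (σ ++ l)) := by
    intro l
    induction l with
    | nil => intro σ; exact ⟨by simpa using (hfirst σ).1, by simp⟩
    | cons j l ih =>
      intro σ
      obtain ⟨h1, h2⟩ := ih (σ ++ [j])
      have h3 : h (P σ) ++ [j] <+: h (P (σ ++ [j])) := hstep σ j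
      have h4 : h (P σ) <+: h (P ((σ ++ [j]) ++ l)) :=
        ((List.prefix_append _ [j]).trans h3).trans h2
      have h5 : h (P ((σ ++ [j]) ++ l)) ∈ P ((σ ++ [j]) ++ l) := (hfirst _).1
      have h6 : h (P σ) ∈ P ((σ ++ [j]) ++ l) := (hperf _).2.1 _ _ h4 h5
      constructor
      · simpa [List.append_assoc] using h6
      · simpa [List.append_assoc] using h4
  -- h (P σ) ∈ Q
  have hhQ : ∀ σ, h (P σ) ∈ Q := by
    intro σ
    rw [hQmem]
    intro n
    rcases le_or_gt n σ.length with hle | hlt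
    · refine ⟨σ.take n, by simp [hle], ?_⟩
      have := hsubl (σ.drop n) (σ.take n)
      rw [List.take_append_drop] at this
      exact this (hfirst σ).1
    · refine ⟨σ ++ List.replicate (n - σ.length) false, by simp; omega, ?_⟩
      exact (hmem (List.replicate (n - σ.length) false) σ).1
  -- length bound: σ.length ≤ (h (P σ)).length
  have hlen : ∀ σ : List Bool, σ.length ≤ (h (P σ)).length := by
    intro σ
    induction σ using List.reverseRecOn with
    | nil => simp
    | append_singleton σ j ih =>
      have h3 : h (P σ) ++ [j] <+: h (P (σ ++ [j])) := hstep σ j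
      have := h3.length_le
      simp only [List.length_append, List.length_cons, List.length_nil] at *
      omega
  -- Q is a tree
  have htree : IsTree2 Q := by
    intro s t hst ht
    rw [hQmem] at ht ⊢
    intro n
    obtain ⟨σ, hσ, htσ⟩ := ht n
    exact ⟨σ, hσ, (hperf σ).2.1 s t hst htσ⟩
  -- h (P σ) splits in Q
  have hsplitsQ : ∀ σ, Splits Q (h (P σ)) := by
    intro σ
    constructor
    · exact htree _ _ (hstep σ false) (hhQ (σ ++ [false]))
    · exact htree _ _ (hstep σ true) (hhQ (σ ++ [true]))
  refine ⟨⟨h (P []), hhQ []⟩, htree, ?_⟩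
  intro t ht
  rw [hQmem] at ht
  obtain ⟨σ, hσ, htσ⟩ := ht (t.length + 1)
  refine ⟨h (P σ), hhQ σ, ?_, hsplitsQ σ⟩
  rcases hcomp σ t htσ with hp | hp
  · exact hp
  · exfalso
    have := hp.length_le
    have := hlen σ
    omega
end

section
/- For Sacks forcing 𝕊 (perfect trees on 2, ordered by inclusion), every sequence ⟨τ_i : i ∈ ω⟩ of strategies for player II in the generalized Banach–Mazur game admits a constructive strategic fusion. Explicitly: given any perfect tree T, define P_⟨⟩ = T, P̃_σ = τ_{|σ|}(P_σ), P_{σ⌢⟨j⟩} = P̃_σ ↑ (h_{P̃_σ}⌢⟨j⟩) for j ∈ {0,1}, where h_P is the first splitting node of P; then α(T) := ⋂_{i∈ω} ⋃_{|σ|=i} P̃_σ is a perfect tree contained in T, and for every branch x ∈ [α(T)] there is a decreasing sequence of conditions S_{x,0} ≫ τ_0(S_{x,0}) ≫ S_{x,1} ≫ τ_1(S_{x,1}) ≫ ⋯ below T with x ∈ ⋂_b [S_{x,b}]. -/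
def IsStem2 (T : Set (List Bool)) (s : List Bool) : Prop :=
  s ∈ T ∧ ∀ t ∈ T, s <+: t ∨ t <+: s

/-- `q ≪ p` for Sacks conditions: subtree with strictly longer stem. -/
def Sll (q p : Set (List Bool)) : Prop :=
  q ⊆ p ∧ ∃ sq sp : List Bool, IsStem2 q sq ∧ IsStem2 p sp ∧ sp <+: sq ∧ sp ≠ sq

def branches2 (T : Set (List Bool)) : Set (ℕ → Bool) :=
  {x | ∀ n : ℕ, (List.ofFn fun i : Fin n => x i) ∈ T}

/-- The trees `P_σ` of the Sacks fusion construction (indexed by reversed sequences):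
`P_⟨⟩ = T`, and `P_{σ⌢⟨j⟩} = P̃_σ ↑ (h_{P̃_σ}⌢⟨j⟩)` where `P̃_σ = τ_{|σ|}(P_σ)` and
`h P` is the first splitting node of `P`. -/
def sacksP (τ : ℕ → Set (List Bool) → Set (List Bool)) (h : Set (List Bool) → List Bool)
    (T : Set (List Bool)) : List Bool → Set (List Bool)
  | [] => T
  | j :: ρ => restrict2 (τ ρ.length (sacksP τ h T ρ))
      (h (τ ρ.length (sacksP τ h T ρ)) ++ [j])

/-- `α(T) = ⋂_i ⋃_{|σ|=i} P̃_σ`. -/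
def sacksFusion (τ : ℕ → Set (List Bool) → Set (List Bool))
    (h : Set (List Bool) → List Bool) (T : Set (List Bool)) : Set (List Bool) :=
  ⋂ i : ℕ, ⋃ ρ : List Bool, ⋃ (_ : ρ.length = i), τ ρ.length (sacksP τ h T ρ)

namespace SacksAux

/-- `h P` is a stem of any perfect tree `P` (given the first-splitting-node properties). -/
theorem stem_h (h : Set (List Bool) → List Bool)
    (hh : ∀ P : Set (List Bool), PerfectTree P → h P ∈ P ∧ Splits P (h P) ∧
      ∀ t ∈ P, Splits P t → h P <+: t)
    (P : Set (List Bool)) (hP : PerfectTree P) : IsStem2 P (h P) := by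
  refine ⟨(hh P hP).1, fun t ht => ?_⟩
  obtain ⟨u, hu, htu, hsp⟩ := hP.2.2 t ht
  have h1 : h P <+: u := (hh P hP).2.2 u hu hsp
  exact (List.prefix_or_prefix_of_prefix h1 htu)

theorem restrict2_subset (P : Set (List Bool)) (s : List Bool) : restrict2 P s ⊆ P :=
  fun _ ht => ht.1

theorem restrict2_perfect (P : Set (List Bool)) (hP : PerfectTree P) (s : List Bool)
    (hs : s ∈ P) : PerfectTree (restrict2 P s) := by
  refine ⟨⟨s, hs, Or.inl (List.prefix_refl s)⟩, ?_, ?_⟩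
  · rintro a b hab ⟨hbP, hb⟩
    refine ⟨hP.2.1 a b hab hbP, ?_⟩
    rcases hb with hb | hb
    · exact List.prefix_or_prefix_of_prefix hb hab
    · exact Or.inr (hab.trans hb)
  · rintro t ⟨htP, hts⟩
    rcases hts with hts | hts
    · -- s <+: t : extend t to a splitting node of P
      obtain ⟨u, hu, htu, hsp⟩ := hP.2.2 t htP
      have hsu : s <+: u := hts.trans htu
      refine ⟨u, ⟨hu, Or.inl hsu⟩, htu, ⟨hsp.1, Or.inl (hsu.trans (List.prefix_append _ _))⟩,
        ⟨hsp.2, Or.inl (hsu.trans (List.prefix_append _ _))⟩⟩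
    · -- t <+: s : extend s
      obtain ⟨u, hu, hsu, hsp⟩ := hP.2.2 s hs
      refine ⟨u, ⟨hu, Or.inl hsu⟩, hts.trans hsu, ⟨hsp.1, Or.inl (hsu.trans (List.prefix_append _ _))⟩,
        ⟨hsp.2, Or.inl (hsu.trans (List.prefix_append _ _))⟩⟩

theorem restrict2_stem (P : Set (List Bool)) (s : List Bool) (hs : s ∈ P) :
    IsStem2 (restrict2 P s) s :=
  ⟨⟨hs, Or.inl (List.prefix_refl s)⟩, fun t ht => ht.2⟩

theorem hj_mem (h : Set (List Bool) → List Bool)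
    (hh : ∀ P : Set (List Bool), PerfectTree P → h P ∈ P ∧ Splits P (h P) ∧
      ∀ t ∈ P, Splits P t → h P <+: t)
    (P : Set (List Bool)) (hP : PerfectTree P) (j : Bool) : h P ++ [j] ∈ P := by
  cases j
  · exact (hh P hP).2.1.1
  · exact (hh P hP).2.1.2

theorem Sll_restrict2 (h : Set (List Bool) → List Bool)
    (hh : ∀ P : Set (List Bool), PerfectTree P → h P ∈ P ∧ Splits P (h P) ∧
      ∀ t ∈ P, Splits P t → h P <+: t)
    (P : Set (List Bool)) (hP : PerfectTree P) (j : Bool) :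
    Sll (restrict2 P (h P ++ [j])) P := by
  refine ⟨restrict2_subset P _, h P ++ [j], h P,
    restrict2_stem P _ (hj_mem h hh P hP j), stem_h h hh P hP, List.prefix_append _ _, ?_⟩
  intro he
  have := congrArg List.length he
  simp at this

end SacksAux
namespace SacksAux

section
variable (τ : ℕ → Set (List Bool) → Set (List Bool)) (h : Set (List Bool) → List Bool)
  (T : Set (List Bool))

/-- `P̃_ρ = τ_{|ρ|}(P_ρ)`. -/
def Pt (ρ : List Bool) : Set (List Bool) := τ ρ.length (sacksP τ h T ρ)

theorem sacksP_cons (j : Bool) (ρ : List Bool) :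
    sacksP τ h T (j :: ρ) = restrict2 (Pt τ h T ρ) (h (Pt τ h T ρ) ++ [j]) := rfl

variable (hh : ∀ P : Set (List Bool), PerfectTree P → h P ∈ P ∧ Splits P (h P) ∧
      ∀ t ∈ P, Splits P t → h P <+: t)
  (hτ : ∀ (i : ℕ) (P : Set (List Bool)), PerfectTree P →
      PerfectTree (τ i P) ∧ Sll (τ i P) P)
  (hT : PerfectTree T)

include hh hτ hT

theorem sacksP_perfect : ∀ ρ : List Bool, PerfectTree (sacksP τ h T ρ)
  | [] => hT
  | j :: ρ => by
    have hPt : PerfectTree (Pt τ h T ρ) :=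
      (hτ ρ.length _ (sacksP_perfect ρ)).1
    rw [sacksP_cons]
    exact restrict2_perfect _ hPt _ (hj_mem h hh _ hPt j)

theorem Pt_perfect (ρ : List Bool) : PerfectTree (Pt τ h T ρ) :=
  (hτ ρ.length _ (sacksP_perfect τ h T hh hτ hT ρ)).1

theorem Pt_subset (ρ : List Bool) : Pt τ h T ρ ⊆ sacksP τ h T ρ :=
  (hτ ρ.length _ (sacksP_perfect τ h T hh hτ hT ρ)).2.1

theorem cons_subset (j : Bool) (ρ : List Bool) : Pt τ h T (j :: ρ) ⊆ Pt τ h T ρ := by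
  refine (Pt_subset τ h T hh hτ hT (j :: ρ)).trans ?_
  rw [sacksP_cons]; exact restrict2_subset _ _

theorem sacksP_subset_T : ∀ ρ : List Bool, sacksP τ h T ρ ⊆ T
  | [] => subset_rfl
  | j :: ρ => by
    rw [sacksP_cons]
    exact (restrict2_subset _ _).trans ((Pt_subset τ h T hh hτ hT ρ).trans
      (sacksP_subset_T ρ))

theorem Pt_append_subset (a : List Bool) : ∀ ρ : List Bool, Pt τ h T (a ++ ρ) ⊆ Pt τ h T ρ := by
  induction a with
  | nil => exact fun ρ => subset_rfl
  | cons j a ih =>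
    intro ρ
    exact (cons_subset τ h T hh hτ hT j (a ++ ρ)).trans (ih ρ)

/-- Members of `P̃_{j::ρ}` are comparable with `h(P̃_ρ) ++ [j]`. -/
theorem comp_of_mem_cons (j : Bool) (ρ : List Bool) (t : List Bool)
    (ht : t ∈ Pt τ h T (j :: ρ)) :
    h (Pt τ h T ρ) ++ [j] <+: t ∨ t <+: h (Pt τ h T ρ) ++ [j] := by
  have := Pt_subset τ h T hh hτ hT (j :: ρ) ht
  rw [sacksP_cons] at this
  exact this.2

/-- The stems grow strictly along the construction. -/
theorem h_grow (j : Bool) (ρ : List Bool) :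
    h (Pt τ h T ρ) ++ [j] <+: h (Pt τ h T (j :: ρ)) := by
  set s := h (Pt τ h T ρ) ++ [j] with hs
  have hQ : PerfectTree (Pt τ h T (j :: ρ)) := Pt_perfect τ h T hh hτ hT (j :: ρ)
  set h' := h (Pt τ h T (j :: ρ)) with hh'
  have hsp : Splits (Pt τ h T (j :: ρ)) h' := (hh _ hQ).2.1
  have c0 := comp_of_mem_cons τ h T hh hτ hT j ρ _ hsp.1
  have c1 := comp_of_mem_cons τ h T hh hτ hT j ρ _ hsp.2
  have hne : (h' ++ [false] : List Bool) ≠ h' ++ [true] := by simp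
  have key : s <+: h' ++ [false] ∧ s <+: h' ++ [true] := by
    rcases c0 with c0 | c0 <;> rcases c1 with c1 | c1
    · exact ⟨c0, c1⟩
    · exact absurd ((c1.trans c0).eq_of_length (by simp)) hne.symm
    · exact absurd ((c0.trans c1).eq_of_length (by simp)) hne
    · exact absurd ((List.prefix_of_prefix_length_le c0 c1 (by simp)).eq_of_length (by simp)) hne
  rcases Nat.lt_or_ge (h'.length) s.length with hl | hl
  · -- |s| ≥ |h'|+1, so s = h'++[false] = h'++[true], contradiction
    have h1 : s = h' ++ [false] := key.1.eq_of_length (by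
      have := key.1.length_le; simp at this ⊢; omega)
    have h2 : s = h' ++ [true] := key.2.eq_of_length (by
      have := key.2.length_le; simp at this ⊢; omega)
    exact absurd (h1 ▸ h2) hne
  · exact List.prefix_of_prefix_length_le key.1 (h'.prefix_append [false]) hl

theorem h_len (ρ : List Bool) : ρ.length ≤ (h (Pt τ h T ρ)).length := by
  induction ρ with
  | nil => exact Nat.zero_le _
  | cons j ρ ih =>
    have := (h_grow τ h T hh hτ hT j ρ).length_le
    simp only [List.length_append, List.length_cons, List.length_singleton] at this ⊢
    omega

theorem h_mono (a : List Bool) : ∀ ρ : List Bool, h (Pt τ h T ρ) <+: h (Pt τ h T (a ++ ρ)) := by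
  induction a with
  | nil => exact fun ρ => List.prefix_refl _
  | cons j a ih =>
    intro ρ
    refine (ih ρ).trans ?_
    exact (List.prefix_append _ [j]).trans (h_grow τ h T hh hτ hT j (a ++ ρ))

end
end SacksAux
namespace SacksAux

section
variable (τ : ℕ → Set (List Bool) → Set (List Bool)) (h : Set (List Bool) → List Bool)
  (T : Set (List Bool))
  (hh : ∀ P : Set (List Bool), PerfectTree P → h P ∈ P ∧ Splits P (h P) ∧
      ∀ t ∈ P, Splits P t → h P <+: t)
  (hτ : ∀ (i : ℕ) (P : Set (List Bool)), PerfectTree P →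
      PerfectTree (τ i P) ∧ Sll (τ i P) P)
  (hT : PerfectTree T)

include hh hτ hT

/-- Uniqueness: a sufficiently long node of a level-`i` tree determines the tree. -/
theorem sacksU : ∀ ρ ρ' t : List Bool, ρ.length = ρ'.length →
    t ∈ Pt τ h T ρ → t ∈ Pt τ h T ρ' → (h (Pt τ h T ρ)).length < t.length → ρ = ρ'
  | [], [], _, _, _, _, _ => rfl
  | [], _ :: _, _, hl, _, _, _ => by simp at hl
  | _ :: _, [], _, hl, _, _, _ => by simp at hl
  | j :: κ, j' :: κ', t, hl, ht, ht', hlen => by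
    have hgrow := (h_grow τ h T hh hτ hT j κ).length_le
    have hlenκ : (h (Pt τ h T κ)).length < t.length := by
      simp only [List.length_append, List.length_singleton] at hgrow; omega
    have hκ : κ = κ' := by
      refine sacksU κ κ' t (by simpa using hl)
        (cons_subset τ h T hh hτ hT j κ ht)
        (cons_subset τ h T hh hτ hT j' κ' ht') hlenκ
    subst hκ
    have c0 := comp_of_mem_cons τ h T hh hτ hT j κ t ht
    have c1 := comp_of_mem_cons τ h T hh hτ hT j' κ t ht'
    have hlong : (h (Pt τ h T κ) ++ [j]).length < t.length := by
      simp only [List.length_append, List.length_singleton] at hgrow ⊢; omega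
    have p0 : h (Pt τ h T κ) ++ [j] <+: t := by
      rcases c0 with c0 | c0
      · exact c0
      · exact absurd c0.length_le (by omega)
    have p1 : h (Pt τ h T κ) ++ [j'] <+: t := by
      rcases c1 with c1 | c1
      · exact c1
      · exact absurd c1.length_le (by simp only [List.length_append,
          List.length_singleton] at hlong ⊢; omega)
    have : (h (Pt τ h T κ) ++ [j] : List Bool) = h (Pt τ h T κ) ++ [j'] :=
      (List.prefix_of_prefix_length_le p0 p1 (by simp)).eq_of_length (by simp)
    simp at this
    rw [this]

theorem mem_fusion_iff (t : List Bool) :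
    t ∈ sacksFusion τ h T ↔ ∀ i : ℕ, ∃ ρ : List Bool, ρ.length = i ∧ t ∈ Pt τ h T ρ := by
  simp only [sacksFusion, Set.mem_iInter, Set.mem_iUnion, Pt]
  constructor
  · rintro H i
    obtain ⟨ρ, hρ, ht⟩ := H i
    exact ⟨ρ, hρ, ht⟩
  · rintro H i
    obtain ⟨ρ, hρ, ht⟩ := H i
    exact ⟨ρ, hρ, ht⟩

theorem h_mem_fusion (ρ : List Bool) : h (Pt τ h T ρ) ∈ sacksFusion τ h T := by
  rw [mem_fusion_iff τ h T hh hτ hT]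
  intro i
  rcases le_or_gt i ρ.length with hi | hi
  · refine ⟨ρ.drop (ρ.length - i), by simp; omega, ?_⟩
    have : ρ.take (ρ.length - i) ++ ρ.drop (ρ.length - i) = ρ := List.take_append_drop _ ρ
    refine Pt_append_subset τ h T hh hτ hT (ρ.take (ρ.length - i)) _ ?_
    rw [this]
    exact (hh _ (Pt_perfect τ h T hh hτ hT ρ)).1
  · refine ⟨List.replicate (i - ρ.length) false ++ ρ, by simp; omega, ?_⟩
    have hm := h_mono τ h T hh hτ hT (List.replicate (i - ρ.length) false) ρ
    exact (Pt_perfect τ h T hh hτ hT _).2.1 _ _ hm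
      (hh _ (Pt_perfect τ h T hh hτ hT _)).1

theorem fusion_tree : IsTree2 (sacksFusion τ h T) := by
  intro s t hst ht
  rw [mem_fusion_iff τ h T hh hτ hT] at ht ⊢
  intro i
  obtain ⟨ρ, hρ, htρ⟩ := ht i
  exact ⟨ρ, hρ, (Pt_perfect τ h T hh hτ hT ρ).2.1 s t hst htρ⟩

theorem fusion_splits (ρ : List Bool) : Splits (sacksFusion τ h T) (h (Pt τ h T ρ)) := by
  constructor <;>
  · exact fusion_tree τ h T hh hτ hT _ _ (h_grow τ h T hh hτ hT _ ρ)
      (h_mem_fusion τ h T hh hτ hT _)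

theorem fusion_perfect : PerfectTree (sacksFusion τ h T) := by
  refine ⟨⟨h (Pt τ h T []), h_mem_fusion τ h T hh hτ hT []⟩, fusion_tree τ h T hh hτ hT, ?_⟩
  intro t ht
  obtain ⟨ρ, hρ, htρ⟩ := (mem_fusion_iff τ h T hh hτ hT t).1 ht t.length
  have hcomp := (stem_h h hh _ (Pt_perfect τ h T hh hτ hT ρ)).2 t htρ
  have hlen : t.length ≤ (h (Pt τ h T ρ)).length := hρ ▸ h_len τ h T hh hτ hT ρ
  have hpre : t <+: h (Pt τ h T ρ) := by
    rcases hcomp with hc | hc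
    · exact (hc.eq_of_length (le_antisymm hc.length_le hlen)).symm ▸ List.prefix_refl _
    · exact hc
  exact ⟨h (Pt τ h T ρ), h_mem_fusion τ h T hh hτ hT ρ, hpre,
    fusion_splits τ h T hh hτ hT ρ⟩

theorem fusion_subset : sacksFusion τ h T ⊆ T := by
  intro t ht
  obtain ⟨ρ, hρ, htρ⟩ := (mem_fusion_iff τ h T hh hτ hT t).1 ht 0
  rw [List.length_eq_zero_iff] at hρ
  subst hρ
  exact sacksP_subset_T τ h T hh hτ hT [] (Pt_subset τ h T hh hτ hT [] htρ)

end
end SacksAux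
namespace SacksAux

theorem ofFn_prefix (x : ℕ → Bool) {n N : ℕ} (hn : n ≤ N) :
    (List.ofFn fun i : Fin n => x i) <+: (List.ofFn fun i : Fin N => x i) := by
  refine List.prefix_iff_eq_take.mpr (List.ext_getElem ?_ ?_)
  · simp [hn]
  · intro i h1 h2; simp [List.getElem_take]

section
variable (τ : ℕ → Set (List Bool) → Set (List Bool)) (h : Set (List Bool) → List Bool)
  (T : Set (List Bool))
  (hh : ∀ P : Set (List Bool), PerfectTree P → h P ∈ P ∧ Splits P (h P) ∧
      ∀ t ∈ P, Splits P t → h P <+: t)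
  (hτ : ∀ (i : ℕ) (P : Set (List Bool)), PerfectTree P →
      PerfectTree (τ i P) ∧ Sll (τ i P) P)
  (hT : PerfectTree T)

include hh hτ hT

/-- The branch step: if `x` is a branch of the fusion and of `P̃_ρ` with `|ρ| = b`,
then `x` is a branch of `P̃_{j::ρ}` where `j = x(|h(P̃_ρ)|)`. -/
theorem branch_step (x : ℕ → Bool) (hx : x ∈ branches2 (sacksFusion τ h T))
    (b : ℕ) (ρ : List Bool) (hlen : ρ.length = b) (hbr : x ∈ branches2 (Pt τ h T ρ)) :
    x ∈ branches2 (Pt τ h T (x (h (Pt τ h T ρ)).length :: ρ)) := by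
  set j := x (h (Pt τ h T ρ)).length with hj
  intro n
  set N := max n ((h (Pt τ h T ρ)).length + 2) with hN
  have hnN : n ≤ N := le_max_left _ _
  have hNlen : (h (Pt τ h T ρ)).length + 2 ≤ N := le_max_right _ _
  set xN : List Bool := List.ofFn fun i : Fin N => x i with hxN
  have hxNlen : xN.length = N := by simp [hxN]
  obtain ⟨ρ', hρ'len, hρ'mem⟩ :=
    (mem_fusion_iff τ h T hh hτ hT xN).1 (hx N) (b + 1)
  obtain ⟨j', κ'⟩ : ∃ j' κ', ρ' = j' :: κ' := by
    cases ρ' with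
    | nil => simp at hρ'len
    | cons a l => exact ⟨a, l, rfl⟩
  obtain ⟨κ', hρ'⟩ := κ'
  subst hρ'
  have hκ'len : κ'.length = b := by simpa using hρ'len
  have hκ'mem : xN ∈ Pt τ h T κ' := cons_subset τ h T hh hτ hT j' κ' hρ'mem
  have hρmem : xN ∈ Pt τ h T ρ := hbr N
  have hκρ : ρ = κ' :=
    sacksU τ h T hh hτ hT ρ κ' xN (by omega)
      hρmem hκ'mem (by rw [hxNlen]; omega)
  subst hκρ
  -- determine j'
  have hcomp := comp_of_mem_cons τ h T hh hτ hT j' ρ xN hρ'mem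
  have hpre : h (Pt τ h T ρ) ++ [j'] <+: xN := by
    rcases hcomp with hc | hc
    · exact hc
    · exact absurd hc.length_le (by simp [hxNlen]; omega)
  have hj' : j' = j := by
    have hidx : (h (Pt τ h T ρ)).length < (h (Pt τ h T ρ) ++ [j']).length := by simp
    have := hpre.getElem hidx
    have hlt : (h (Pt τ h T ρ)).length < N := by omega
    simpa [hxN, List.getElem_ofFn, hlt, hj] using this
  subst hj'
  -- conclude
  exact (Pt_perfect τ h T hh hτ hT (j :: ρ)).2.1 _ xN (ofFn_prefix x hnN) hρ'mem

end
end SacksAux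

/-- For Sacks forcing, every sequence of strategies for player II admits a constructive
strategic fusion: `α(T)` is a perfect tree contained in `T`, and every branch
`x ∈ [α(T)]` comes with a decreasing sequence `S_{x,0} ≫ τ_0(S_{x,0}) ≫ S_{x,1} ≫ ⋯`
of conditions below `T` all of which have `x` as a branch. -/
theorem stmt14 (h : Set (List Bool) → List Bool)
    (hh : ∀ P : Set (List Bool), PerfectTree P → h P ∈ P ∧ Splits P (h P) ∧
      ∀ t ∈ P, Splits P t → h P <+: t)
    (τ : ℕ → Set (List Bool) → Set (List Bool))
    (hτ : ∀ (i : ℕ) (P : Set (List Bool)), PerfectTree P →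
      PerfectTree (τ i P) ∧ Sll (τ i P) P)
    (T : Set (List Bool)) (hT : PerfectTree T) :
    PerfectTree (sacksFusion τ h T) ∧ sacksFusion τ h T ⊆ T ∧
      ∀ x ∈ branches2 (sacksFusion τ h T), ∃ S : ℕ → Set (List Bool),
        ∀ b : ℕ, PerfectTree (S b) ∧ S b ⊆ T ∧ x ∈ branches2 (S b) ∧
          Sll (S (b + 1)) (τ b (S b)) ∧ Sll (τ b (S b)) (S b) := by
  refine ⟨SacksAux.fusion_perfect τ h T hh hτ hT, SacksAux.fusion_subset τ h T hh hτ hT, ?_⟩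
  intro x hx
  -- the chain of indices following the branch x
  let ρseq : ℕ → List Bool := fun b =>
    Nat.rec [] (fun _ ρ => x (h (SacksAux.Pt τ h T ρ)).length :: ρ) b
  have hρ0 : ρseq 0 = [] := rfl
  have hρs : ∀ b, ρseq (b + 1) = x (h (SacksAux.Pt τ h T (ρseq b))).length :: ρseq b :=
    fun b => rfl
  have inv : ∀ b, (ρseq b).length = b ∧ x ∈ branches2 (SacksAux.Pt τ h T (ρseq b)) := by
    intro b
    induction b with
    | zero =>
      refine ⟨rfl, ?_⟩
      intro n
      obtain ⟨ρ, hρ, hmem⟩ := (SacksAux.mem_fusion_iff τ h T hh hτ hT _).1 (hx n) 0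
      rw [List.length_eq_zero_iff] at hρ; subst hρ
      rw [hρ0]; exact hmem
    | succ b ih =>
      rw [hρs b]
      exact ⟨by simp [ih.1], SacksAux.branch_step τ h T hh hτ hT x hx b (ρseq b) ih.1 ih.2⟩
  refine ⟨fun b => sacksP τ h T (ρseq b), fun b => ?_⟩
  have hperf := SacksAux.sacksP_perfect τ h T hh hτ hT (ρseq b)
  have hPtEq : SacksAux.Pt τ h T (ρseq b) = τ b (sacksP τ h T (ρseq b)) := by
    simp only [SacksAux.Pt, (inv b).1]
  refine ⟨hperf, SacksAux.sacksP_subset_T τ h T hh hτ hT (ρseq b), ?_, ?_, ?_⟩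
  · intro n; exact SacksAux.Pt_subset τ h T hh hτ hT (ρseq b) ((inv b).2 n)
  · show Sll (sacksP τ h T (ρseq (b+1))) (τ b (sacksP τ h T (ρseq b)))
    rw [hρs b, SacksAux.sacksP_cons, hPtEq]
    exact SacksAux.Sll_restrict2 h hh _ ((hτ b _ hperf).1) _
  · exact (hτ b _ hperf).2
end

section
/- For Miller forcing 𝕄 (superperfect trees on ω ordered by inclusion), if player II has a winning strategy in the generalized Banach–Mazur game G_𝕄(A) for a set A ⊆ ω^ω, then for every superperfect tree P there is a superperfect tree Q ⊆ P with [Q] ∩ A = ∅. -/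
abbrev Cond := Set (List ℕ)

def seg (x : ℕ → ℕ) (n : ℕ) : List ℕ := List.ofFn fun i : Fin n => x i

def IsTree (T : Cond) : Prop := ∀ s t : List ℕ, s <+: t → t ∈ T → s ∈ T

def IsStem (T : Cond) (s : List ℕ) : Prop := s ∈ T ∧ ∀ t ∈ T, s <+: t ∨ t <+: s

def branches (T : Cond) : Set (ℕ → ℕ) := {x | ∀ n : ℕ, seg x n ∈ T}

def Arboreal (𝕋 : Set Cond) (stem : Cond → List ℕ) : Prop :=
  (∀ T ∈ 𝕋, IsTree T) ∧ (∀ T ∈ 𝕋, IsStem T (stem T)) ∧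
    ∀ T ∈ 𝕋, ∀ N : ℕ, ∃ T' ∈ 𝕋, T' ⊆ T ∧ N ≤ (stem T').length

/-- `q ≪ p`: `q` is a condition, a subtree of `p`, whose stem strictly extends that of `p`. -/
def ll (𝕋 : Set Cond) (stem : Cond → List ℕ) (q p : Cond) : Prop :=
  q ∈ 𝕋 ∧ q ⊆ p ∧ stem p <+: stem q ∧ stem p ≠ stem q

/-- A legal run of the generalized Banach–Mazur game (moves of both players interleaved:
even indices are I's moves, odd indices II's moves). -/
def LegalRun (𝕋 : Set Cond) (stem : Cond → List ℕ) (p : ℕ → Cond) : Prop :=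
  p 0 ∈ 𝕋 ∧ ∀ n, ll 𝕋 stem (p (n + 1)) (p n)

/-- The real produced by a run: the union of the stems of the played conditions. -/
def Outcome (stem : Cond → List ℕ) (p : ℕ → Cond) (y : ℕ → ℕ) : Prop :=
  ∀ n, stem (p n) = seg y (stem (p n)).length

/-- A (positional) strategy in the game `G_ℙ`: a map assigning to each condition a
condition with strictly longer stem below it. -/
def IsStrat (𝕋 : Set Cond) (stem : Cond → List ℕ) (τ : Cond → Cond) : Prop :=
  ∀ S ∈ 𝕋, ll 𝕋 stem (τ S) S

/-- `τ` is a winning strategy for player II in `G_ℙ(A)`. -/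
def PWinII (𝕋 : Set Cond) (stem : Cond → List ℕ) (A : Set (ℕ → ℕ))
    (τ : Cond → Cond) : Prop :=
  IsStrat 𝕋 stem τ ∧
    ∀ p : ℕ → Cond, LegalRun 𝕋 stem p → (∀ n, p (2 * n + 1) = τ (p (2 * n))) →
      ∀ y, Outcome stem p y → y ∉ A

/-- `τ` is a winning strategy for player I in `G_ℙ(A)` (I's first move is `τ 𝟙`). -/
def PWinI (𝕋 : Set Cond) (stem : Cond → List ℕ) (one : Cond) (A : Set (ℕ → ℕ))
    (τ : Cond → Cond) : Prop :=
  IsStrat 𝕋 stem τ ∧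
    ∀ p : ℕ → Cond, LegalRun 𝕋 stem p → p 0 = τ one →
      (∀ n, p (2 * n + 2) = τ (p (2 * n + 1))) →
      ∀ y, Outcome stem p y → y ∈ A

/-- A ℙ-strategic fusion for the sequence of strategies `τ`, at the condition `T`:
(K1) `α T ≤ T`, and (K2) there is `S : [α T] × ω → {P ∈ ℙ : P ≤ T}` with
`S_{x,b+1} ≪ τ_b(S_{x,b}) ≪ S_{x,b}`. -/
def FusionProps (𝕋 : Set Cond) (stem : Cond → List ℕ) (τ : ℕ → Cond → Cond)
    (α : Cond → Cond) (T : Cond) : Prop :=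
  α T ∈ 𝕋 ∧ α T ⊆ T ∧ ∃ S : (ℕ → ℕ) → ℕ → Cond, ∀ x ∈ branches (α T), ∀ b : ℕ,
    S x b ∈ 𝕋 ∧ S x b ⊆ T ∧
      ll 𝕋 stem (S x (b + 1)) (τ b (S x b)) ∧ ll 𝕋 stem (τ b (S x b)) (S x b)

def SplitNode (T : Cond) (t : List ℕ) : Prop :=
  t ∈ T ∧ ∃ m n : ℕ, m ≠ n ∧ t ++ [m] ∈ T ∧ t ++ [n] ∈ T

def OmegaSplitNode (T : Cond) (t : List ℕ) : Prop :=
  t ∈ T ∧ {n : ℕ | t ++ [n] ∈ T}.Infinite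

/-- A superperfect tree (a Miller condition). -/
def Superperfect (T : Cond) : Prop :=
  T.Nonempty ∧ IsTree T ∧ (∀ t, SplitNode T t → OmegaSplitNode T t) ∧
    ∀ t ∈ T, ∃ u ∈ T, t <+: u ∧ SplitNode T u

namespace Stmt16Aux

open List

abbrev SP : Set Cond := {T : Cond | Superperfect T}

lemma prefix_total {l1 l2 l3 : List ℕ} (h1 : l1 <+: l3) (h2 : l2 <+: l3) :
    l1 <+: l2 ∨ l2 <+: l1 := by
  rcases le_total l1.length l2.length with h | h
  · exact Or.inl (List.prefix_of_prefix_length_le h1 h2 h)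
  · exact Or.inr (List.prefix_of_prefix_length_le h2 h1 h)

lemma length_lt_of_proper {l1 l2 : List ℕ} (h : l1 <+: l2) (hne : l1 ≠ l2) :
    l1.length < l2.length :=
  lt_of_le_of_ne h.length_le fun he => hne (h.eq_of_length he)

lemma succ_eq_succ {t : List ℕ} {m n : ℕ} (h : t ++ [m] = t ++ [n]) : m = n := by
  have := List.append_cancel_left h
  simpa using this

lemma seg_length (x : ℕ → ℕ) (n : ℕ) : (seg x n).length = n := by simp [seg]

lemma prefix_seg {s : List ℕ} {x : ℕ → ℕ} {n : ℕ} (h : s <+: seg x n) :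
    s = seg x s.length := by
  have hl : s.length ≤ n := by
    have := h.length_le; simpa [seg_length] using this
  apply List.ext_getElem (by simp [seg_length])
  intro i h1 h2
  rw [h.getElem h1]
  simp [seg]

lemma seg_prefix_seg {x : ℕ → ℕ} {k n : ℕ} (h : k ≤ n) : seg x k <+: seg x n := by
  have : seg x k = (seg x n).take k := by
    apply List.ext_getElem (by simp [seg_length, h])
    intro i h1 h2
    simp only [List.getElem_take]
    simp [seg]
  rw [this]
  exact List.take_prefix _ _

variable (stem : Cond → List ℕ) (τ : Cond → Cond)

def restrictT (T : Cond) (u : List ℕ) : Cond := {t | t ∈ T ∧ (t <+: u ∨ u <+: t)}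

lemma restrict_sub (T : Cond) (u : List ℕ) : restrictT T u ⊆ T := fun _ ht => ht.1

lemma sp_restrict {T : Cond} {u : List ℕ} (hT : Superperfect T) (hu : u ∈ T) :
    Superperfect (restrictT T u) := by
  obtain ⟨hne, htree, hsplit, hext⟩ := hT
  refine ⟨⟨u, hu, Or.inr (List.prefix_refl u)⟩, ?_, ?_, ?_⟩
  · intro s t hst ht
    refine ⟨htree s t hst ht.1, ?_⟩
    rcases ht.2 with h | h
    · exact Or.inl (hst.trans h)
    · exact (prefix_total hst h)
  · rintro t ⟨⟨htT, htu⟩, m, n, hmn, ⟨hmT, hmu⟩, ⟨hnT, hnu⟩⟩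
    have hut : u <+: t := by
      rcases hmu with hm | hm
      · rcases hnu with hn | hn
        · exfalso
          have h3 := List.prefix_of_prefix_length_le hm hn (by simp)
          exact hmn (succ_eq_succ (h3.eq_of_length (by simp)))
        · exfalso
          exact hmn (succ_eq_succ ((hm.trans hn).eq_of_length (by simp)))
      · have hlen : u.length ≤ t.length ∨ u.length = t.length + 1 := by
          have := hm.length_le; simp at this; omega
        rcases hlen with h | h
        · exact List.prefix_of_prefix_length_le hm (List.prefix_append t [m]) (by simpa using h)
        · exfalso
          have hu' : u = t ++ [m] := hm.eq_of_length (by simp [h])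
          rw [hu'] at hnu
          rcases hnu with hn | hn
          · exact hmn (succ_eq_succ (hn.eq_of_length (by simp))).symm
          · exact hmn (succ_eq_succ (hn.eq_of_length (by simp)))
    have hsp := hsplit t ⟨htT, m, n, hmn, hmT, hnT⟩
    refine ⟨⟨htT, htu⟩, ?_⟩
    apply hsp.2.mono
    intro a ha
    exact ⟨ha, Or.inr (hut.trans (List.prefix_append t [a]))⟩
  · rintro t ⟨htT, htu⟩
    obtain ⟨v, hvT, hv_t, hv_u⟩ : ∃ v ∈ T, t <+: v ∧ u <+: v := by
      rcases htu with h | h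
      · exact ⟨u, hu, h, List.prefix_refl u⟩
      · exact ⟨t, htT, List.prefix_refl t, h⟩
    obtain ⟨w, hwT, hvw, hwsplit⟩ := hext v hvT
    obtain ⟨-, hwinf⟩ := hsplit w hwsplit
    have hwu : u <+: w := hv_u.trans hvw
    obtain ⟨m, hm, n, hn, hmn⟩ := hwinf.nontrivial
    refine ⟨w, ⟨hwT, Or.inr hwu⟩, hv_t.trans hvw, ⟨hwT, Or.inr hwu⟩, m, n, hmn, ?_, ?_⟩
    · exact ⟨hm, Or.inr (hwu.trans (List.prefix_append w [m]))⟩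
    · exact ⟨hn, Or.inr (hwu.trans (List.prefix_append w [n]))⟩

variable (hstem : ∀ T : Cond, Superperfect T → IsStem T (stem T))
variable (hstrat : IsStrat SP stem τ)

include hstrat in
lemma iter_facts {R : Cond} (hR : Superperfect R) (j : ℕ) :
    Superperfect (τ^[j] R) ∧ τ^[j] R ⊆ R ∧ j ≤ (stem (τ^[j] R)).length := by
  induction j with
  | zero => exact ⟨hR, subset_rfl, Nat.zero_le _⟩
  | succ j ih =>
    obtain ⟨h1, h2, h3⟩ := ih
    have hs := hstrat _ h1
    rw [Function.iterate_succ_apply']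
    refine ⟨hs.1, hs.2.1.trans h2, ?_⟩
    have := length_lt_of_proper hs.2.2.1 hs.2.2.2
    omega

def moveT (r : Cond) (u : List ℕ) : Cond := τ^[u.length + 1] (restrictT r u)

include hstem hstrat in
lemma move_facts {r : Cond} {u : List ℕ} (hr : Superperfect r) (hu : u ∈ r)
    (hsu : stem r <+: u) (hne : stem r ≠ u) :
    Superperfect (moveT τ r u) ∧ moveT τ r u ⊆ r ∧
      u <+: stem (moveT τ r u) ∧ ll SP stem (moveT τ r u) r := by
  have hR := sp_restrict hr hu
  obtain ⟨h1, h2, h3⟩ := iter_facts stem τ hstrat hR (u.length + 1)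
  have heq : moveT τ r u = τ^[u.length + 1] (restrictT r u) := rfl
  rw [← heq] at h1 h2 h3
  have hmemR : stem (moveT τ r u) ∈ restrictT r u := h2 ((hstem _ h1).1)
  have hum : u <+: stem (moveT τ r u) := by
    rcases hmemR.2 with h | h
    · have := h.length_le; exact absurd this (by omega)
    · exact h
  have hsub : moveT τ r u ⊆ r := h2.trans (restrict_sub r u)
  have hlen2 : (stem r).length < u.length := length_lt_of_proper hsu hne
  refine ⟨h1, hsub, hum, h1, hsub, hsu.trans hum, ?_⟩
  intro he
  have := congrArg List.length he
  omega

noncomputable def wch (r : Cond) : List ℕ :=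
  Classical.epsilon fun w => stem r <+: w ∧ OmegaSplitNode r w

include hstem in
lemma wch_spec {r : Cond} (hr : Superperfect r) :
    stem r <+: wch stem r ∧ OmegaSplitNode r (wch stem r) := by
  apply Classical.epsilon_spec (p := fun w => stem r <+: w ∧ OmegaSplitNode r w)
  obtain ⟨w, hwT, hsw, hsp⟩ := hr.2.2.2 _ ((hstem r hr).1)
  exact ⟨w, hsw, hr.2.2.1 w hsp⟩

noncomputable def kch (r : Cond) : ℕ → ℕ :=
  Classical.epsilon fun k => Function.Injective k ∧ ∀ i, wch stem r ++ [k i] ∈ r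

include hstem in
lemma kch_spec {r : Cond} (hr : Superperfect r) :
    Function.Injective (kch stem r) ∧ ∀ i, wch stem r ++ [kch stem r i] ∈ r := by
  apply Classical.epsilon_spec
    (p := fun k => Function.Injective k ∧ ∀ i, wch stem r ++ [k i] ∈ r)
  obtain ⟨-, hinf⟩ := (wch_spec stem hstem hr).2
  exact ⟨fun i => ((Set.Infinite.natEmbedding _ hinf) i).1,
    fun i j h => (Set.Infinite.natEmbedding _ hinf).injective (Subtype.ext h),
    fun i => ((Set.Infinite.natEmbedding _ hinf) i).2⟩

variable (P : Cond)

noncomputable def Ab : List ℕ → Cond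
  | [] => P
  | i :: σ => moveT τ (τ (Ab σ)) (wch stem (τ (Ab σ)) ++ [kch stem (τ (Ab σ)) i])

noncomputable def Wb (σ : List ℕ) : List ℕ := wch stem (τ (Ab stem τ P σ))

noncomputable def Kb (σ : List ℕ) : ℕ → ℕ := kch stem (τ (Ab stem τ P σ))

lemma Ab_cons (i : ℕ) (σ : List ℕ) :
    Ab stem τ P (i :: σ) =
      moveT τ (τ (Ab stem τ P σ)) (Wb stem τ P σ ++ [Kb stem τ P σ i]) := rfl

include hstem hstrat in
lemma ab_step {σ : List ℕ} (hA : Superperfect (Ab stem τ P σ)) (i : ℕ) :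
    Superperfect (Ab stem τ P (i :: σ)) ∧ Ab stem τ P (i :: σ) ⊆ Ab stem τ P σ ∧
      ll SP stem (Ab stem τ P (i :: σ)) (τ (Ab stem τ P σ)) ∧
      Wb stem τ P σ ++ [Kb stem τ P σ i] <+: stem (Ab stem τ P (i :: σ)) := by
  have hB := hstrat _ hA
  have hBsp : Superperfect (τ (Ab stem τ P σ)) := hB.1
  have hw := wch_spec stem hstem hBsp
  have hk := kch_spec stem hstem hBsp
  have hu : Wb stem τ P σ ++ [Kb stem τ P σ i] ∈ τ (Ab stem τ P σ) := hk.2 i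
  have hsu : stem (τ (Ab stem τ P σ)) <+: Wb stem τ P σ ++ [Kb stem τ P σ i] :=
    hw.1.trans (List.prefix_append _ _)
  have hne : stem (τ (Ab stem τ P σ)) ≠ Wb stem τ P σ ++ [Kb stem τ P σ i] := by
    intro he
    have h1 : (stem (τ (Ab stem τ P σ))).length ≤ (Wb stem τ P σ).length := hw.1.length_le
    have h2 := congrArg List.length he
    simp only [List.length_append, List.length_cons, List.length_nil] at h2
    omega
  have hm := move_facts stem τ hstem hstrat hBsp hu hsu hne
  rw [Ab_cons]
  exact ⟨hm.1, hm.2.1.trans hB.2.1, hm.2.2.2, hm.2.2.1⟩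

variable (hP : Superperfect P)

include hstem hstrat hP

lemma ab_sp : ∀ σ : List ℕ, Superperfect (Ab stem τ P σ) ∧ Ab stem τ P σ ⊆ P := by
  intro σ
  induction σ with
  | nil => exact ⟨hP, subset_rfl⟩
  | cons i σ ih =>
    have h := ab_step stem τ hstem hstrat P ih.1 i
    exact ⟨h.1, h.2.1.trans ih.2⟩

lemma Bb_sp (σ : List ℕ) : Superperfect (τ (Ab stem τ P σ)) :=
  (hstrat _ (ab_sp stem τ hstem hstrat P hP σ).1).1

lemma K_inj (σ : List ℕ) : Function.Injective (Kb stem τ P σ) :=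
  (kch_spec stem hstem (Bb_sp stem τ hstem hstrat P hP σ)).1

lemma W_mem (σ : List ℕ) : Wb stem τ P σ ∈ τ (Ab stem τ P σ) :=
  (wch_spec stem hstem (Bb_sp stem τ hstem hstrat P hP σ)).2.1

lemma stemB_W (σ : List ℕ) : stem (τ (Ab stem τ P σ)) <+: Wb stem τ P σ :=
  (wch_spec stem hstem (Bb_sp stem τ hstem hstrat P hP σ)).1

lemma stemA_W (σ : List ℕ) : stem (Ab stem τ P σ) <+: Wb stem τ P σ :=
  ((hstrat _ (ab_sp stem τ hstem hstrat P hP σ).1).2.2.1).trans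
    (stemB_W stem τ hstem hstrat P hP σ)

lemma U_prefix_W (σ : List ℕ) (i : ℕ) :
    Wb stem τ P σ ++ [Kb stem τ P σ i] <+: Wb stem τ P (i :: σ) :=
  ((ab_step stem τ hstem hstrat P (ab_sp stem τ hstem hstrat P hP σ).1 i).2.2.2).trans
    (stemA_W stem τ hstem hstrat P hP (i :: σ))

lemma W_len_lt (σ : List ℕ) (i : ℕ) :
    (Wb stem τ P σ).length < (Wb stem τ P (i :: σ)).length := by
  have := (U_prefix_W stem τ hstem hstrat P hP σ i).length_le
  simp only [List.length_append, List.length_cons, List.length_nil] at this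
  omega

lemma W_mono : ∀ σ' σ : List ℕ, σ <:+ σ' →
    Wb stem τ P σ <+: Wb stem τ P σ' ∧
      (Wb stem τ P σ).length + σ'.length ≤ (Wb stem τ P σ').length + σ.length := by
  intro σ'
  induction σ' with
  | nil =>
    intro σ h
    rw [List.suffix_nil.mp h]
    exact ⟨List.prefix_refl _, le_rfl⟩
  | cons j ρ ih =>
    intro σ h
    rcases List.suffix_cons_iff.mp h with h | h
    · rw [h]; exact ⟨List.prefix_refl _, le_rfl⟩
    · obtain ⟨h1, h2⟩ := ih σ h
      have h3 : Wb stem τ P ρ <+: Wb stem τ P (j :: ρ) :=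
        (List.prefix_append _ _).trans (U_prefix_W stem τ hstem hstrat P hP ρ j)
      have h4 := W_len_lt stem τ hstem hstrat P hP ρ j
      refine ⟨h1.trans h3, ?_⟩
      simp only [List.length_cons]
      omega

lemma Jlem : ∀ n : ℕ, ∀ σ σ' : List ℕ, σ.length + σ'.length ≤ n →
    ((∀ i : ℕ, Wb stem τ P σ ++ [Kb stem τ P σ i] <+: Wb stem τ P σ' → (i :: σ) <:+ σ') ∧
      (Wb stem τ P σ = Wb stem τ P σ' → σ = σ')) := by
  have WM := W_mono stem τ hstem hstrat P hP
  have UW := U_prefix_W stem τ hstem hstrat P hP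
  have KI := K_inj stem τ hstem hstrat P hP
  intro n
  induction n with
  | zero =>
    intro σ σ' hlen
    have hσ : σ = [] := List.length_eq_zero_iff.mp (by omega)
    have hσ' : σ' = [] := List.length_eq_zero_iff.mp (by omega)
    subst hσ; subst hσ'
    refine ⟨fun i hpre => ?_, fun _ => rfl⟩
    exfalso
    have := hpre.length_le
    simp only [List.length_append, List.length_cons, List.length_nil] at this
    omega
  | succ n ih =>
    intro σ σ' hlen
    constructor
    · intro i hpre
      cases σ' with
      | nil =>
        exfalso
        have h1 := (WM σ [] List.nil_suffix).1.length_le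
        have h2 := hpre.length_le
        simp only [List.length_append, List.length_cons, List.length_nil] at h2
        omega
      | cons j ρ =>
        have hU : Wb stem τ P ρ ++ [Kb stem τ P ρ j] <+: Wb stem τ P (j :: ρ) := UW ρ j
        have hWρ : Wb stem τ P ρ <+: Wb stem τ P (j :: ρ) := (List.prefix_append _ _).trans hU
        rcases le_or_gt ((Wb stem τ P σ).length + 1) (Wb stem τ P ρ).length with hc | hc
        · have h5 : Wb stem τ P σ ++ [Kb stem τ P σ i] <+: Wb stem τ P ρ :=
            List.prefix_of_prefix_length_le hpre hWρ (by simp; omega)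
          have h6 := (ih σ ρ (by simp only [List.length_cons] at hlen; omega)).1 i h5
          exact h6.trans (List.suffix_cons j ρ)
        · have hWσpre : Wb stem τ P σ <+: Wb stem τ P (j :: ρ) :=
            (List.prefix_append _ _).trans hpre
          have hWρσ : Wb stem τ P ρ <+: Wb stem τ P σ :=
            List.prefix_of_prefix_length_le hWρ hWσpre (by omega)
          rcases eq_or_lt_of_le (show (Wb stem τ P ρ).length ≤ (Wb stem τ P σ).length by omega)
            with he | hl
          · have hWeq : Wb stem τ P ρ = Wb stem τ P σ := hWρσ.eq_of_length he
            have hσρ : σ = ρ := (ih σ ρ (by simp only [List.length_cons] at hlen; omega)).2 hWeq.symm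
            subst hσρ
            have h7 : Wb stem τ P σ ++ [Kb stem τ P σ i] = Wb stem τ P σ ++ [Kb stem τ P σ j] :=
              (List.prefix_of_prefix_length_le hpre hU (by simp)).eq_of_length (by simp)
            have h8 : i = j := KI σ (succ_eq_succ h7)
            rw [h8]
          · have hUρσ : Wb stem τ P ρ ++ [Kb stem τ P ρ j] <+: Wb stem τ P σ :=
              List.prefix_of_prefix_length_le hU hWσpre (by simp; omega)
            have hsuf := (ih ρ σ (by simp only [List.length_cons] at hlen; omega)).1 j hUρσ
            exfalso
            have h9 := (WM σ (j :: ρ) hsuf).1.length_le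
            have h10 := hpre.length_le
            simp only [List.length_append, List.length_cons, List.length_nil] at h10
            omega
    · intro heq
      cases σ with
      | nil =>
        cases σ' with
        | nil => rfl
        | cons j ρ =>
          exfalso
          have h1 := (WM (j :: ρ) [] List.nil_suffix).2
          rw [heq] at h1
          simp only [List.length_cons, List.length_nil] at h1
          omega
      | cons i σ₀ =>
        cases σ' with
        | nil =>
          exfalso
          have h1 := (WM (i :: σ₀) [] List.nil_suffix).2
          rw [← heq] at h1
          simp only [List.length_cons, List.length_nil] at h1
          omega
        | cons j ρ₀ =>
          have hU1 : Wb stem τ P σ₀ ++ [Kb stem τ P σ₀ i] <+: Wb stem τ P (j :: ρ₀) :=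
            heq ▸ UW σ₀ i
          have hU2 : Wb stem τ P ρ₀ ++ [Kb stem τ P ρ₀ j] <+: Wb stem τ P (j :: ρ₀) := UW ρ₀ j
          rcases lt_trichotomy ((Wb stem τ P σ₀).length) ((Wb stem τ P ρ₀).length)
            with hlt | heq2 | hgt
          · exfalso
            have hWρ₀ : Wb stem τ P ρ₀ <+: Wb stem τ P (j :: ρ₀) :=
              (List.prefix_append _ _).trans hU2
            have h5 : Wb stem τ P σ₀ ++ [Kb stem τ P σ₀ i] <+: Wb stem τ P ρ₀ :=
              List.prefix_of_prefix_length_le hU1 hWρ₀ (by simp; omega)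
            have hsuf := (ih σ₀ ρ₀ (by simp only [List.length_cons] at hlen; omega)).1 i h5
            have h6 := (WM ρ₀ (i :: σ₀) hsuf).1.length_le
            have h7 := hU2.length_le
            have h8 := congrArg List.length heq
            simp only [List.length_append, List.length_cons, List.length_nil] at h7 h8
            omega
          · have hWρ₀ : Wb stem τ P ρ₀ <+: Wb stem τ P (j :: ρ₀) :=
              (List.prefix_append _ _).trans hU2
            have hWσ₀ : Wb stem τ P σ₀ <+: Wb stem τ P (j :: ρ₀) :=
              (List.prefix_append _ _).trans hU1
            have hWeq : Wb stem τ P σ₀ = Wb stem τ P ρ₀ :=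
              (List.prefix_of_prefix_length_le hWσ₀ hWρ₀ (by omega)).eq_of_length heq2
            have h5 : σ₀ = ρ₀ := (ih σ₀ ρ₀ (by simp only [List.length_cons] at hlen; omega)).2 hWeq
            subst h5
            have h7 : Wb stem τ P σ₀ ++ [Kb stem τ P σ₀ i] = Wb stem τ P σ₀ ++ [Kb stem τ P σ₀ j] :=
              (List.prefix_of_prefix_length_le hU1 hU2 (by simp)).eq_of_length (by simp)
            have h8 : i = j := KI σ₀ (succ_eq_succ h7)
            rw [h8]
          · exfalso
            have hWσ₀ : Wb stem τ P σ₀ <+: Wb stem τ P (j :: ρ₀) :=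
              (List.prefix_append _ _).trans hU1
            have h5 : Wb stem τ P ρ₀ ++ [Kb stem τ P ρ₀ j] <+: Wb stem τ P σ₀ :=
              List.prefix_of_prefix_length_le hU2 hWσ₀ (by simp; omega)
            have hsuf := (ih ρ₀ σ₀ (by simp only [List.length_cons] at hlen; omega)).1 j h5
            have h6 := (WM σ₀ (j :: ρ₀) hsuf).1.length_le
            have h7 := hU1.length_le
            simp only [List.length_append, List.length_cons, List.length_nil] at h7
            omega

lemma W_cmp (σ σ' : List ℕ) (h : Wb stem τ P σ <+: Wb stem τ P σ') : σ <:+ σ' := by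
  cases σ with
  | nil => exact List.nil_suffix
  | cons i σ₀ =>
    have hU : Wb stem τ P σ₀ ++ [Kb stem τ P σ₀ i] <+: Wb stem τ P σ' :=
      (U_prefix_W stem τ hstem hstrat P hP σ₀ i).trans h
    exact (Jlem stem τ hstem hstrat P hP (σ₀.length + σ'.length) σ₀ σ' le_rfl).1 i hU

lemma splitW : ∀ n : ℕ, ∀ σ1 σ2 t : List ℕ, ∀ m m' : ℕ,
    σ1.length + σ2.length ≤ n → m ≠ m' →
    t ++ [m] <+: Wb stem τ P σ1 → t ++ [m'] <+: Wb stem τ P σ2 →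
    ∃ ρ, t = Wb stem τ P ρ := by
  have WM := W_mono stem τ hstem hstrat P hP
  have UW := U_prefix_W stem τ hstem hstrat P hP
  have JL := Jlem stem τ hstem hstrat P hP
  intro n
  induction n with
  | zero =>
    intro σ1 σ2 t m m' hlen hmm h1 h2
    have hσ1 : σ1 = [] := List.length_eq_zero_iff.mp (by omega)
    have hσ2 : σ2 = [] := List.length_eq_zero_iff.mp (by omega)
    subst hσ1; subst hσ2
    exact absurd (succ_eq_succ ((List.prefix_of_prefix_length_le h1 h2 (by simp)).eq_of_length
      (by simp))) hmm
  | succ n ih =>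
    intro σ1 σ2 t m m' hlen hmm h1 h2
    cases σ1 with
    | nil =>
      exfalso
      have hW : Wb stem τ P [] <+: Wb stem τ P σ2 := (WM σ2 [] List.nil_suffix).1
      have h3 : t ++ [m] <+: Wb stem τ P σ2 := h1.trans hW
      exact hmm (succ_eq_succ ((List.prefix_of_prefix_length_le h3 h2 (by simp)).eq_of_length
        (by simp)))
    | cons i ρ1 =>
      cases σ2 with
      | nil =>
        exfalso
        have hW : Wb stem τ P [] <+: Wb stem τ P (i :: ρ1) := (WM _ [] List.nil_suffix).1
        have h3 : t ++ [m'] <+: Wb stem τ P (i :: ρ1) := h2.trans hW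
        exact hmm (succ_eq_succ ((List.prefix_of_prefix_length_le h1 h3 (by simp)).eq_of_length
          (by simp)))
      | cons j ρ2 =>
        have hWρ1 : Wb stem τ P ρ1 <+: Wb stem τ P (i :: ρ1) :=
          (List.prefix_append _ _).trans (UW ρ1 i)
        have hWρ2 : Wb stem τ P ρ2 <+: Wb stem τ P (j :: ρ2) :=
          (List.prefix_append _ _).trans (UW ρ2 j)
        rcases le_or_gt (t.length + 1) ((Wb stem τ P ρ1).length) with hc1 | hc1
        · have h3 : t ++ [m] <+: Wb stem τ P ρ1 :=
            List.prefix_of_prefix_length_le h1 hWρ1 (by simp; omega)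
          exact ih ρ1 (j :: ρ2) t m m' (by simp only [List.length_cons] at hlen ⊢; omega) hmm h3 h2
        rcases le_or_gt (t.length + 1) ((Wb stem τ P ρ2).length) with hc2 | hc2
        · have h3 : t ++ [m'] <+: Wb stem τ P ρ2 :=
            List.prefix_of_prefix_length_le h2 hWρ2 (by simp; omega)
          exact ih (i :: ρ1) ρ2 t m m' (by simp only [List.length_cons] at hlen ⊢; omega) hmm h1 h3
        have hW1tm : Wb stem τ P ρ1 <+: t ++ [m] :=
          List.prefix_of_prefix_length_le hWρ1 h1 (by simp; omega)
        have hW1t : Wb stem τ P ρ1 <+: t :=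
          List.prefix_of_prefix_length_le hW1tm (List.prefix_append t [m]) (by omega)
        have hW2tm : Wb stem τ P ρ2 <+: t ++ [m'] :=
          List.prefix_of_prefix_length_le hWρ2 h2 (by simp; omega)
        have hW2t : Wb stem τ P ρ2 <+: t :=
          List.prefix_of_prefix_length_le hW2tm (List.prefix_append t [m']) (by omega)
        rcases eq_or_lt_of_le (show (Wb stem τ P ρ1).length ≤ t.length by omega) with he1 | hl1
        · exact ⟨ρ1, (hW1t.eq_of_length he1).symm⟩
        rcases eq_or_lt_of_le (show (Wb stem τ P ρ2).length ≤ t.length by omega) with he2 | hl2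
        · exact ⟨ρ2, (hW2t.eq_of_length he2).symm⟩
        exfalso
        have hu1tm : Wb stem τ P ρ1 ++ [Kb stem τ P ρ1 i] <+: t ++ [m] :=
          List.prefix_of_prefix_length_le (UW ρ1 i) h1 (by simp; omega)
        have hu1t : Wb stem τ P ρ1 ++ [Kb stem τ P ρ1 i] <+: t :=
          List.prefix_of_prefix_length_le hu1tm (List.prefix_append t [m]) (by simp; omega)
        have h5 : Wb stem τ P ρ1 ++ [Kb stem τ P ρ1 i] <+: Wb stem τ P (j :: ρ2) :=
          (hu1t.trans (List.prefix_append t [m'])).trans h2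
        have hsuf := (JL (ρ1.length + (j :: ρ2).length) ρ1 (j :: ρ2) le_rfl).1 i h5
        have h6 := (WM (j :: ρ2) (i :: ρ1) hsuf).1
        have h7 : t ++ [m] <+: Wb stem τ P (j :: ρ2) := h1.trans h6
        exact hmm (succ_eq_succ ((List.prefix_of_prefix_length_le h7 h2 (by simp)).eq_of_length
          (by simp)))

omit hP in
noncomputable def Qt : Cond := {t | ∃ σ : List ℕ, t <+: Wb stem τ P σ}

lemma Q_sp : Superperfect (Qt stem τ P) ∧ Qt stem τ P ⊆ P := by
  have WM := W_mono stem τ hstem hstrat P hP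
  have UW := U_prefix_W stem τ hstem hstrat P hP
  have KI := K_inj stem τ hstem hstrat P hP
  have SW := splitW stem τ hstem hstrat P hP
  constructor
  · refine ⟨⟨Wb stem τ P [], ⟨[], List.prefix_refl _⟩⟩, ?_, ?_, ?_⟩
    · rintro s t hst ⟨σ, hσ⟩
      exact ⟨σ, hst.trans hσ⟩
    · rintro t ⟨⟨σ0, ht⟩, m, m', hmm, ⟨σ1, h1⟩, ⟨σ2, h2⟩⟩
      obtain ⟨ρ, rfl⟩ := SW (σ1.length + σ2.length) σ1 σ2 t m m' le_rfl hmm h1 h2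
      refine ⟨⟨σ0, ht⟩, ?_⟩
      apply Set.Infinite.mono (s := Set.range (Kb stem τ P ρ))
      · rintro a ⟨i, rfl⟩
        exact ⟨i :: ρ, UW ρ i⟩
      · exact Set.infinite_range_of_injective (KI ρ)
    · rintro t ⟨σ, hσ⟩
      refine ⟨Wb stem τ P σ, ⟨σ, List.prefix_refl _⟩, hσ, ⟨σ, List.prefix_refl _⟩,
        Kb stem τ P σ 0, Kb stem τ P σ 1, fun h => by simpa using KI σ h,
        ⟨0 :: σ, UW σ 0⟩, ⟨1 :: σ, UW σ 1⟩⟩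
  · rintro t ⟨σ, hσ⟩
    have hBsub : τ (Ab stem τ P σ) ⊆ P :=
      (hstrat _ (ab_sp stem τ hstem hstrat P hP σ).1).2.1.trans
        (ab_sp stem τ hstem hstrat P hP σ).2
    exact hP.2.1 t _ hσ (hBsub (W_mem stem τ hstem hstrat P hP σ))

lemma W_seg_base (x : ℕ → ℕ) (hx : x ∈ branches (Qt stem τ P)) :
    Wb stem τ P [] = seg x (Wb stem τ P []).length := by
  obtain ⟨σ, h⟩ := hx ((Wb stem τ P []).length)
  have hW : Wb stem τ P [] <+: Wb stem τ P σ :=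
    (W_mono stem τ hstem hstrat P hP σ [] List.nil_suffix).1
  have h2 := List.prefix_of_prefix_length_le h hW (by simp [seg_length])
  exact (h2.eq_of_length (by simp [seg_length])).symm

lemma W_seg_step (x : ℕ → ℕ) (hx : x ∈ branches (Qt stem τ P)) (σ : List ℕ)
    (hσ : Wb stem τ P σ = seg x (Wb stem τ P σ).length) :
    ∃ i : ℕ, Wb stem τ P (i :: σ) = seg x (Wb stem τ P (i :: σ)).length := by
  have WM := W_mono stem τ hstem hstrat P hP
  have UW := U_prefix_W stem τ hstem hstrat P hP
  obtain ⟨σ', h'⟩ := hx ((Wb stem τ P σ).length + 1)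
  have hWt : Wb stem τ P σ <+: seg x ((Wb stem τ P σ).length + 1) := by
    rw [hσ]
    exact seg_prefix_seg (by rw [← hσ]; omega)
  have hWW : Wb stem τ P σ <+: Wb stem τ P σ' := hWt.trans h'
  have hlt : (Wb stem τ P σ).length < (Wb stem τ P σ').length := by
    have := h'.length_le
    simp only [seg_length] at this
    omega
  have hsuf : σ <:+ σ' := W_cmp stem τ hstem hstrat P hP σ σ' hWW
  have hne : σ ≠ σ' := by
    rintro rfl
    omega
  obtain ⟨i, hisuf⟩ : ∃ i : ℕ, (i :: σ) <:+ σ' := by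
    obtain ⟨l, hl⟩ := hsuf
    have hlne : l ≠ [] := by
      rintro rfl
      simp at hl
      exact hne hl
    rcases List.eq_nil_or_concat l with rfl | ⟨l₀, i, rfl⟩
    · exact absurd rfl hlne
    · exact ⟨i, l₀, by rw [← hl]; simp⟩
  have hUW' : Wb stem τ P σ ++ [Kb stem τ P σ i] <+: Wb stem τ P σ' :=
    (UW σ i).trans (WM σ' (i :: σ) hisuf).1
  have hteq : seg x ((Wb stem τ P σ).length + 1) = Wb stem τ P σ ++ [Kb stem τ P σ i] :=
    (List.prefix_of_prefix_length_le h' hUW' (by simp [seg_length])).eq_of_length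
      (by simp [seg_length])
  refine ⟨i, ?_⟩
  obtain ⟨σ'', h''⟩ := hx ((Wb stem τ P (i :: σ)).length)
  have hUlen : (Wb stem τ P σ).length + 1 ≤ (Wb stem τ P (i :: σ)).length := by
    have := (UW σ i).length_le
    simp only [List.length_append, List.length_cons, List.length_nil] at this
    omega
  have hUt'' : Wb stem τ P σ ++ [Kb stem τ P σ i] <+: seg x ((Wb stem τ P (i :: σ)).length) := by
    rw [← hteq]
    exact seg_prefix_seg hUlen
  have h5 : Wb stem τ P σ ++ [Kb stem τ P σ i] <+: Wb stem τ P σ'' := hUt''.trans h''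
  have hsuf2 := (Jlem stem τ hstem hstrat P hP (σ.length + σ''.length) σ σ'' le_rfl).1 i h5
  have h6 : Wb stem τ P (i :: σ) <+: Wb stem τ P σ'' := (WM σ'' (i :: σ) hsuf2).1
  exact ((List.prefix_of_prefix_length_le h'' h6 (by simp [seg_length])).eq_of_length
    (by simp [seg_length])).symm

end Stmt16Aux


/-- For Miller forcing: if II has a winning strategy in the generalized Banach–Mazur
game `G_𝕄(A)`, then below every superperfect tree `P` there is a superperfect tree `Q`
whose branch set is disjoint from `A`. -/
theorem stmt16 (stem : Cond → List ℕ)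
    (hstem : ∀ T : Cond, Superperfect T → IsStem T (stem T))
    (A : Set (ℕ → ℕ)) (τ : Cond → Cond)
    (hτ : PWinII {T : Cond | Superperfect T} stem A τ) :
    ∀ P : Cond, Superperfect P → ∃ Q : Cond, Superperfect Q ∧ Q ⊆ P ∧
      branches Q ∩ A = ∅ := by
  classical
  intro P hP
  obtain ⟨hstrat, hwin⟩ := hτ
  refine ⟨Stmt16Aux.Qt stem τ P, (Stmt16Aux.Q_sp stem τ hstem hstrat P hP).1,
    (Stmt16Aux.Q_sp stem τ hstem hstrat P hP).2, ?_⟩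
  rw [Set.eq_empty_iff_forall_notMem]
  rintro x ⟨hxQ, hxA⟩
  have base := Stmt16Aux.W_seg_base stem τ hstem hstrat P hP x hxQ
  have step := Stmt16Aux.W_seg_step stem τ hstem hstrat P hP x hxQ
  let σs : ℕ → {σ : List ℕ // Stmt16Aux.Wb stem τ P σ = seg x (Stmt16Aux.Wb stem τ P σ).length} :=
    fun n => Nat.rec (motive := fun _ =>
        {σ : List ℕ // Stmt16Aux.Wb stem τ P σ = seg x (Stmt16Aux.Wb stem τ P σ).length})
      ⟨[], base⟩
      (fun _ prev => ⟨(step prev.1 prev.2).choose :: prev.1, (step prev.1 prev.2).choose_spec⟩) n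
  have hσs : ∀ n : ℕ, ∃ i : ℕ, (σs (n + 1)).1 = i :: (σs n).1 := fun n => ⟨_, rfl⟩
  let p : ℕ → Cond := fun n =>
    if Even n then Stmt16Aux.Ab stem τ P (σs (n / 2)).1
    else τ (Stmt16Aux.Ab stem τ P (σs (n / 2)).1)
  have hpe : ∀ m : ℕ, p (2 * m) = Stmt16Aux.Ab stem τ P (σs m).1 := by
    intro m
    have h1 : Even (2 * m) := even_two_mul m
    have h2 : 2 * m / 2 = m := by omega
    show (if Even (2 * m) then Stmt16Aux.Ab stem τ P (σs (2 * m / 2)).1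
      else τ (Stmt16Aux.Ab stem τ P (σs (2 * m / 2)).1)) = _
    rw [if_pos h1, h2]
  have hpo : ∀ m : ℕ, p (2 * m + 1) = τ (Stmt16Aux.Ab stem τ P (σs m).1) := by
    intro m
    have h1 : ¬ Even (2 * m + 1) := by rw [Nat.even_iff]; omega
    have h2 : (2 * m + 1) / 2 = m := by omega
    show (if Even (2 * m + 1) then Stmt16Aux.Ab stem τ P (σs ((2 * m + 1) / 2)).1
      else τ (Stmt16Aux.Ab stem τ P (σs ((2 * m + 1) / 2)).1)) = _
    rw [if_neg h1, h2]
  have hlegal : LegalRun {T : Cond | Superperfect T} stem p := by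
    constructor
    · rw [show (0 : ℕ) = 2 * 0 from rfl, hpe 0]
      exact (Stmt16Aux.ab_sp stem τ hstem hstrat P hP _).1
    · intro n
      rcases Nat.even_or_odd n with ⟨m, hm⟩ | ⟨m, hm⟩
      · have hn : n = 2 * m := by omega
        subst hn
        rw [show 2 * m + 1 = 2 * m + 1 from rfl, hpo m, hpe m]
        exact hstrat _ (Stmt16Aux.ab_sp stem τ hstem hstrat P hP _).1
      · have hn : n = 2 * m + 1 := by omega
        subst hn
        have h1 : p (2 * m + 1 + 1) = Stmt16Aux.Ab stem τ P (σs (m + 1)).1 := by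
          rw [show 2 * m + 1 + 1 = 2 * (m + 1) by ring, hpe]
        rw [h1, hpo m]
        obtain ⟨i, hi⟩ := hσs m
        rw [hi]
        exact (Stmt16Aux.ab_step stem τ hstem hstrat P
          (Stmt16Aux.ab_sp stem τ hstem hstrat P hP _).1 i).2.2.1
  have hfollow : ∀ n : ℕ, p (2 * n + 1) = τ (p (2 * n)) := by
    intro n
    rw [hpo n, hpe n]
  have houtcome : Outcome stem p x := by
    intro n
    rcases Nat.even_or_odd n with ⟨m, hm⟩ | ⟨m, hm⟩
    · have hn : n = 2 * m := by omega
      subst hn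
      rw [hpe m]
      have h1 : stem (Stmt16Aux.Ab stem τ P (σs m).1) <+:
          seg x ((Stmt16Aux.Wb stem τ P (σs m).1).length) := by
        rw [← (σs m).2]
        exact Stmt16Aux.stemA_W stem τ hstem hstrat P hP (σs m).1
      exact Stmt16Aux.prefix_seg h1
    · have hn : n = 2 * m + 1 := by omega
      subst hn
      rw [hpo m]
      have h1 : stem (τ (Stmt16Aux.Ab stem τ P (σs m).1)) <+:
          seg x ((Stmt16Aux.Wb stem τ P (σs m).1).length) := by
        rw [← (σs m).2]
        exact Stmt16Aux.stemB_W stem τ hstem hstrat P hP (σs m).1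
      exact Stmt16Aux.prefix_seg h1
  exact hwin p hlegal hfollow x houtcome hxA
end

section
/- For willowtree forcing 𝕎: if W⁰ ≥₀ W¹ ≥₁ W² ≥₂ ⋯ is a sequence of willowtrees, where W ≥_i W' means W' ≤ W and the first i+1 blocks a₀,…,a_i of W (ordered by their minima) remain blocks of W', then the sequence ⟨W^i : i ∈ ω⟩ has a common lower bound in 𝕎, i.e. its 'intersection' ⟨⋃_i f_i, {a_i^{(i)} : i ∈ ω}⟩ is again a willowtree condition below every W^i. -/
/-- A willowtree condition `⟨f, A⟩`: `A` is an infinite family of pairwise disjoint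
nonempty finite subsets of ω (the blocks), and `f` is defined (i.e. `≠ none`) exactly
off the union of the blocks. -/
def WTreeCond (f : ℕ → Option Bool) (A : Set (Set ℕ)) : Prop :=
  A.Infinite ∧ (∀ a ∈ A, a.Finite ∧ a.Nonempty) ∧ A.PairwiseDisjoint id ∧
    ∀ n : ℕ, f n = none ↔ n ∈ ⋃₀ A

/-- The tree `T_{⟨f,A⟩}` associated to a willowtree: all `s ∈ 2^{<ω}` respecting `f`
and constant on each block of `A` (within the length of `s`). -/
def wtree (f : ℕ → Option Bool) (A : Set (Set ℕ)) : Set (List Bool) :=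
  {s | (∀ (n : ℕ) (hn : n < s.length) (b : Bool), f n = some b → s.get ⟨n, hn⟩ = b) ∧
    ∀ a ∈ A, ∀ m ∈ a, ∀ n ∈ a, ∀ (hm : m < s.length) (hn : n < s.length),
      s.get ⟨m, hm⟩ = s.get ⟨n, hn⟩}

/-!
Decided values can only persist down a `≤`-chain, so the parts `fᵢ` increase and the
undecided region `⋃ Aᵢ` shrinks. Since the first `i + 1` blocks of `Wⁱ` survive into
`Wⁱ⁺¹`, and every other block of `Wⁱ⁺¹` lies inside `⋃ Aᵢ` above the minimum of `aᵢ⁽ⁱ⁾`,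
they are still its first `i + 1` blocks, with the same indices. Hence `aⱼ⁽ⁱ⁾ = aⱼ⁽ʲ⁾` for
`j ≤ i`, and a point `n` only ever meets blocks of index `≤ n`: everything about `n` is
settled at stage `n`, which makes the diagonal `⟨n ↦ fₙ(n), {aᵢ⁽ⁱ⁾}⟩` a condition
below every `Wⁱ`.
-/

open Set

/-- A fusion sequence `W⁰ ≥₀ W¹ ≥₁ ⋯` with `Wⁱ = ⟨f i, range (a i)⟩`. -/
structure IsFusionSeq (f : ℕ → ℕ → Option Bool) (a : ℕ → ℕ → Set ℕ) : Prop where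
  cond : ∀ i, WTreeCond (f i) (range (a i))
  strictMono : ∀ i, StrictMono fun j => sInf (a i j)
  wtree_succ_subset : ∀ i, wtree (f (i + 1)) (range (a (i + 1))) ⊆ wtree (f i) (range (a i))
  mem_range_succ : ∀ i, ∀ j ≤ i, a i j ∈ range (a (i + 1))

lemma ofFn_getD_mem_wtree {f : ℕ → Option Bool} {A : Set (Set ℕ)}
    (hA : ∀ n ∈ ⋃₀ A, f n = none) (v : Bool) (L : ℕ) :
    List.ofFn (fun k : Fin L => (f k).getD v) ∈ wtree f A := by
  refine ⟨fun n hn b hb => by simp [hb], fun s hs m hm n hn _ _ => ?_⟩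
  simp [hA m ⟨s, hs, hm⟩, hA n ⟨s, hs, hn⟩]

lemma eq_some_of_wtree_subset {f₀ f₁ : ℕ → Option Bool} {A₀ A₁ : Set (Set ℕ)}
    (hA₁ : ∀ n ∈ ⋃₀ A₁, f₁ n = none) (hsub : wtree f₁ A₁ ⊆ wtree f₀ A₀)
    {n : ℕ} {b : Bool} (hb : f₀ n = some b) : f₁ n = some b := by
  -- the branch deciding every undecided point as `v` lies in `T_{f₁,A₁}`
  have hbranch : ∀ v, (f₁ n).getD v = b := fun v => by
    have := (hsub (ofFn_getD_mem_wtree hA₁ v (n + 1))).1 n (by simp) b hb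
    rwa [List.get_ofFn] at this
  cases h : f₁ n with
  | none => simpa [h] using (hbranch true).trans (hbranch false).symm
  | some c => simpa [h] using hbranch c

lemma WTreeCond.sUnion_subset_of_wtree_subset {f₀ f₁ : ℕ → Option Bool}
    {A₀ A₁ : Set (Set ℕ)} (h₀ : WTreeCond f₀ A₀) (h₁ : WTreeCond f₁ A₁)
    (hsub : wtree f₁ A₁ ⊆ wtree f₀ A₀) : ⋃₀ A₁ ⊆ ⋃₀ A₀ := by
  intro n hn
  refine (h₀.2.2.2 n).1 (Option.eq_none_iff_forall_ne_some.2 fun b hb => ?_)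
  have := eq_some_of_wtree_subset (fun m => (h₁.2.2.2 m).2) hsub hb
  simp [(h₁.2.2.2 n).2 hn] at this

lemma le_of_mem_of_strictMono_sInf {A : ℕ → Set ℕ} (hA : StrictMono fun j => sInf (A j))
    {j n : ℕ} (hn : n ∈ A j) : j ≤ n :=
  hA.le_apply.trans (Nat.sInf_le hn)

lemma ne_of_strictMono_sInf {A : ℕ → Set ℕ} (hA : StrictMono fun j => sInf (A j))
    {j k : ℕ} (hjk : j ≠ k) : A j ≠ A k :=
  fun h => hjk (hA.injective (congrArg sInf h))

lemma eq_of_forall_le_mem_range {A B : ℕ → Set ℕ} {i : ℕ}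
    (hA : StrictMono fun j => sInf (A j)) (hB : StrictMono fun j => sInf (B j))
    (hBne : ∀ j, (B j).Nonempty) (hBdisj : (range B).PairwiseDisjoint id)
    (hBA : ⋃₀ range B ⊆ ⋃₀ range A) (hkeep : ∀ j ≤ i, A j ∈ range B) :
    ∀ j ≤ i, B j = A j := by
  intro j
  induction j using Nat.strong_induction_on with
  | _ j ih =>
  intro hj
  obtain ⟨k, hk⟩ := hkeep j hj
  have hjk : j ≤ k := by
    by_contra! hkj
    exact ne_of_strictMono_sInf hA hkj.ne ((ih k hkj (by omega)).symm.trans hk)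
  have hle : sInf (B j) ≤ sInf (A j) := hk ▸ hB.monotone hjk
  have hge : sInf (A j) ≤ sInf (B j) := by
    have hmem : sInf (B j) ∈ B j := Nat.sInf_mem (hBne j)
    obtain ⟨l, hl⟩ : ∃ l, sInf (B j) ∈ A l := by
      simpa using hBA ⟨B j, mem_range_self j, hmem⟩
    rcases lt_or_ge l j with hlj | hjl
    · have hne := ne_of_strictMono_sInf hB hlj.ne
      rw [← ih l hlj (by omega)] at hl
      exact absurd hmem (disjoint_left.1 (hBdisj (mem_range_self l) (mem_range_self j) hne) hl)
    · exact (hA.monotone hjl).trans (Nat.sInf_le hl)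
  rw [← hk, hB.injective (hk ▸ le_antisymm hle hge : sInf (B j) = sInf (B k))]

namespace IsFusionSeq

variable {f : ℕ → ℕ → Option Bool} {a : ℕ → ℕ → Set ℕ}

lemma wtree_antitone (h : IsFusionSeq f a) :
    Antitone fun i => wtree (f i) (range (a i)) :=
  antitone_nat_of_succ_le h.wtree_succ_subset

lemma eq_some_of_le (h : IsFusionSeq f a) {i i' n : ℕ} {b : Bool} (hi : i ≤ i')
    (hb : f i n = some b) : f i' n = some b :=
  eq_some_of_wtree_subset (fun m => ((h.cond i').2.2.2 m).2) (h.wtree_antitone hi) hb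

lemma block_succ_eq (h : IsFusionSeq f a) {i j : ℕ} (hj : j ≤ i) : a (i + 1) j = a i j :=
  eq_of_forall_le_mem_range (h.strictMono i) (h.strictMono (i + 1))
    (fun j => ((h.cond (i + 1)).2.1 _ (mem_range_self j)).2) (h.cond (i + 1)).2.2.1
    ((h.cond i).sUnion_subset_of_wtree_subset (h.cond (i + 1)) (h.wtree_succ_subset i))
    (h.mem_range_succ i) j hj

lemma block_eq_diag (h : IsFusionSeq f a) {i j : ℕ} (hj : j ≤ i) : a i j = a j j := by
  induction i, hj using Nat.le_induction with
  | base => rfl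
  | succ i hji ih => rw [h.block_succ_eq hji, ih]

lemma mem_sUnion_iff_mem_sUnion_diag (h : IsFusionSeq f a) {i n : ℕ} (hn : n ≤ i) :
    n ∈ ⋃₀ range (a i) ↔ n ∈ ⋃₀ range fun j => a j j := by
  simp only [sUnion_range, mem_iUnion]
  constructor
  · rintro ⟨j, hnj⟩
    have hj := le_of_mem_of_strictMono_sInf (h.strictMono i) hnj
    exact ⟨j, h.block_eq_diag (hj.trans hn) ▸ hnj⟩
  · rintro ⟨j, hnj⟩
    have hj := le_of_mem_of_strictMono_sInf (h.strictMono j) hnj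
    exact ⟨j, (h.block_eq_diag (hj.trans hn)).symm ▸ hnj⟩

lemma apply_eq_diag (h : IsFusionSeq f a) {i n : ℕ} (hn : n ≤ i) : f i n = f n n := by
  cases hnn : f n n with
  | some b => exact h.eq_some_of_le hn hnn
  | none =>
    rw [(h.cond i).2.2.2, h.mem_sUnion_iff_mem_sUnion_diag hn,
      ← h.mem_sUnion_iff_mem_sUnion_diag le_rfl, ← (h.cond n).2.2.2]
    exact hnn

lemma diag_eq_some (h : IsFusionSeq f a) {i n : ℕ} {b : Bool} (hb : f i n = some b) :
    f n n = some b := by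
  rw [← h.apply_eq_diag (le_max_right i n)]
  exact h.eq_some_of_le (le_max_left i n) hb

lemma diag_strictMono (h : IsFusionSeq f a) : StrictMono fun i => sInf (a i i) :=
  strictMono_nat_of_lt_succ fun i => by
    simpa only [h.block_succ_eq le_rfl] using h.strictMono (i + 1) (Nat.lt_succ_self i)

lemma wTreeCond_diag (h : IsFusionSeq f a) :
    WTreeCond (fun n => f n n) (range fun i => a i i) := by
  refine ⟨infinite_range_of_injective fun i j hij => h.diag_strictMono.injective
    (congrArg sInf hij), ?_, ?_, fun n => ?_⟩
  · rintro _ ⟨i, rfl⟩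
    exact (h.cond i).2.1 _ (mem_range_self i)
  · have hdisj : ∀ i j, i < j → Disjoint (a i i) (a j j) := fun i j hij => by
      rw [← h.block_eq_diag hij.le]
      exact (h.cond j).2.2.1 (mem_range_self i) (mem_range_self j)
        (ne_of_strictMono_sInf (h.strictMono j) hij.ne)
    rintro _ ⟨i, rfl⟩ _ ⟨j, rfl⟩ hne
    rcases lt_trichotomy i j with hij | rfl | hji
    · exact hdisj i j hij
    · exact absurd rfl hne
    · exact (hdisj j i hji).symm
  · exact ((h.cond n).2.2.2 n).trans (h.mem_sUnion_iff_mem_sUnion_diag le_rfl)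

/-- A node `s` of the diagonal tree already lies in `T_{Wᴵ}` for `I ≥ |s|`, since blocks
of `Wᴵ` meeting `[0, |s|)` have index below `|s|` and are diagonal blocks. -/
lemma wtree_diag_subset (h : IsFusionSeq f a) (i : ℕ) :
    wtree (fun n => f n n) (range fun j => a j j) ⊆ wtree (f i) (range (a i)) := by
  intro s hs
  set I := max i s.length
  refine h.wtree_antitone (le_max_left i s.length) ⟨fun n hn b hb => hs.1 n hn b
    (h.diag_eq_some hb), ?_⟩
  rintro _ ⟨j, rfl⟩ m hm n hn hm' hn'
  have hjI : j ≤ I :=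
    (le_of_mem_of_strictMono_sInf (h.strictMono I) hm).trans (hm'.le.trans (le_max_right _ _))
  rw [h.block_eq_diag hjI] at hm hn
  exact hs.2 _ ⟨j, rfl⟩ m hm n hn hm' hn'

end IsFusionSeq

/-- Fusion for willowtree forcing: if `W⁰ ≥₀ W¹ ≥₁ W² ≥₂ ⋯` is a sequence of
willowtrees `Wⁱ = ⟨f i, range (a i)⟩` (blocks `a i j` enumerated increasingly by their
minima), where `W ≥ᵢ W'` means `W' ≤ W` (inclusion of the associated trees) and the
first `i+1` blocks of `W` remain blocks of `W'`, then the sequence has a lower bound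
in 𝕎, namely `⟨⋃ᵢ fᵢ, {aᵢ^{(i)} : i ∈ ω}⟩`. -/
theorem stmt17 (f : ℕ → ℕ → Option Bool) (a : ℕ → ℕ → Set ℕ)
    (hcond : ∀ i, WTreeCond (f i) (Set.range (a i)))
    (hmono : ∀ i, ∀ j k : ℕ, j < k → sInf (a i j) < sInf (a i k))
    (hseq : ∀ i, wtree (f (i + 1)) (Set.range (a (i + 1))) ⊆
      wtree (f i) (Set.range (a i)))
    (hkeep : ∀ i, ∀ j ≤ i, a i j ∈ Set.range (a (i + 1))) :
    ∃ g : ℕ → Option Bool,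
      (∀ i n b, f i n = some b → g n = some b) ∧
      WTreeCond g (Set.range fun i => a i i) ∧
      ∀ i, wtree g (Set.range fun j => a j j) ⊆ wtree (f i) (Set.range (a i)) := by
  have h : IsFusionSeq f a := ⟨hcond, fun i j k => hmono i j k, hseq, hkeep⟩
  exact ⟨fun n => f n n, fun _ _ _ => h.diag_eq_some, h.wTreeCond_diag, h.wtree_diag_subset⟩
end
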